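/- arXiv:2511.22747 — 3 statements merged into one kernel-verified Lean document; each statement's English description precedes it below -/
import Mathlib

section
/- Every geometric hyperplane of the Grassmann geometry G_{n,k} (1 ≤ k ≤ n−1) is a maximal subspace; equivalently, for every geometric hyperplane H, the subgraph of the collinearity graph of G_{n,k} induced on the complement of H is connected. -/
/-- A point-line geometry: a set of lines (sets of points), each line has at
least two points, and two distinct points lie on at most one common line. -/
structure PointLineGeometry (P : Type*) where
  lines : Set (Set P)
  two_points : ∀ ℓ ∈ lines, ∃ a ∈ ℓ, ∃ b ∈ ℓ, a ≠ b
  unique_line : ∀ ℓ₁ ∈ lines, ∀ ℓ₂ ∈ lines, ∀ a b : P,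
    a ≠ b → a ∈ ℓ₁ → b ∈ ℓ₁ → a ∈ ℓ₂ → b ∈ ℓ₂ → ℓ₁ = ℓ₂

namespace PointLineGeometry

variable {P : Type*} (G : PointLineGeometry P)

/-- A subspace: a nonempty set of points containing every line meeting it in
at least two points. -/
def IsSubspace (X : Set P) : Prop :=
  X.Nonempty ∧ ∀ ℓ ∈ G.lines, (∃ a ∈ ℓ ∩ X, ∃ b ∈ ℓ ∩ X, a ≠ b) → ℓ ⊆ X

/-- A geometric hyperplane: a proper subspace meeting every line in the whole
line or in exactly one point. -/
def IsGeomHyperplane (H : Set P) : Prop :=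
  G.IsSubspace H ∧ H ≠ Set.univ ∧
    ∀ ℓ ∈ G.lines, ℓ ⊆ H ∨ ∃! p, p ∈ ℓ ∩ H

/-- A maximal (proper) subspace. -/
def IsMaxSubspace (H : Set P) : Prop :=
  G.IsSubspace H ∧ H ≠ Set.univ ∧ ∀ X, G.IsSubspace X → H ⊂ X → X = Set.univ

/-- The collinearity graph. -/
def collGraph : SimpleGraph P where
  Adj p q := p ≠ q ∧ ∃ ℓ ∈ G.lines, p ∈ ℓ ∧ q ∈ ℓ
  symm := by
    constructor
    rintro p q ⟨hpq, ℓ, hℓ, hp, hq⟩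
    exact ⟨hpq.symm, ℓ, hℓ, hq, hp⟩
  loopless := ⟨fun p h => h.1 rfl⟩

end PointLineGeometry

/-- A projective embedding of a point-line geometry into `PG(V)`. -/
def IsProjEmbedding {P K V : Type*} [Field K] [AddCommGroup V] [Module K V]
    (G : PointLineGeometry P) (ε : P → Projectivization K V) : Prop :=
  Function.Injective ε ∧
  (∀ ℓ ∈ G.lines, ∃ W : Submodule K V, Module.finrank K W = 2 ∧
      ε '' ℓ = {x : Projectivization K V | x.submodule ≤ W}) ∧
  (⨆ p : P, (ε p).submodule) = ⊤

/-- The projective hyperplane of `PG(V)` given by a nonzero functional. -/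
def pgHyp {K V : Type*} [Field K] [AddCommGroup V] [Module K V]
    (φ : V →ₗ[K] K) : Set (Projectivization K V) :=
  {x | x.submodule ≤ LinearMap.ker φ}

/-- The projective code of the system of points represented by `v`. -/
noncomputable def evCode (K : Type*) {V ι : Type*} [Field K] [AddCommGroup V]
    [Module K V] (v : ι → V) : Submodule K (ι → K) :=
  LinearMap.range (LinearMap.pi (fun i => LinearMap.applyₗ (v i)))

/-- A minimal code: every nonzero codeword is determined, up to a scalar
multiple, by its support. -/
def IsMinimalCode {K ι : Type*} [Field K] (C : Submodule K (ι → K)) : Prop :=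
  ∀ c ∈ C, c ≠ 0 → ∀ c' ∈ C, Function.support c' ⊆ Function.support c →
    ∃ a : K, c' = a • c

/-- The Hamming weight of a word. -/
noncomputable def wt {K ι : Type*} [Zero K] (c : ι → K) : ℕ :=
  Nat.card (Function.support c)

/-- The decomposable element `v 0 ∧ ⋯ ∧ v (k-1)` of the `k`-th exterior power. -/
noncomputable def wedgePoint (K : Type*) {V : Type*} [Field K] [AddCommGroup V]
    [Module K V] (k : ℕ) (v : Fin k → V) : ⋀[K]^k V :=
  ⟨ExteriorAlgebra.ιMulti K k v, ExteriorAlgebra.ιMulti_range K k ⟨v, rfl⟩⟩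

/-- Points of the Grassmann geometry: `k`-dimensional subspaces of `K^n`. -/
abbrev GrassPts (K : Type*) [Field K] (n k : ℕ) :=
  {W : Submodule K (Fin n → K) // Module.finrank K W = k}

/-- Lines of the Grassmann geometry: pencils of `k`-subspaces between a
`(k-1)`-subspace and a `(k+1)`-subspace. -/
def grassLines (K : Type*) [Field K] (n k : ℕ) : Set (Set (GrassPts K n k)) :=
  {s | ∃ W T : Submodule K (Fin n → K), Module.finrank K W = k - 1 ∧
      Module.finrank K T = k + 1 ∧ W ≤ T ∧
      s = {X : GrassPts K n k | W ≤ X.1 ∧ X.1 ≤ T}}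

/-- The weight of the codeword of the Grassmann code attached to a linear
functional `f` on `⋀^k K^n`: the number of `k`-subspaces on which `f` does not
vanish. -/
noncomputable def gwt (K : Type*) [Field K] (n k : ℕ)
    (f : ⋀[K]^k (Fin n → K) →ₗ[K] K) : ℕ :=
  Nat.card {W : GrassPts K n k | ∃ v : Fin k → (Fin n → K),
    Submodule.span K (Set.range v) = W.1 ∧ f (wedgePoint K k v) ≠ 0}


open Module Submodule Relation

namespace Stmt12

set_option linter.unusedSectionVars false

variable {K : Type*} [Field K] {V : Type*} [AddCommGroup V] [Module K V]
  [FiniteDimensional K V]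

lemma mem_sup_span {N : Submodule K V} {w x : V} (hx : x ∈ N ⊔ (K ∙ w)) :
    ∃ n ∈ N, ∃ t : K, x = n + t • w := by
  rcases Submodule.mem_sup.1 hx with ⟨n, hn, z, hz, rfl⟩
  rcases Submodule.mem_span_singleton.1 hz with ⟨t, rfl⟩
  exact ⟨n, hn, t, rfl⟩

lemma fr_sup_span {N : Submodule K V} {w : V} (hw : w ∉ N) :
    finrank K ↥(N ⊔ (K ∙ w)) = finrank K ↥N + 1 := by
  have hw0 : w ≠ 0 := fun h => hw (h ▸ N.zero_mem)
  have hinf : N ⊓ (K ∙ w) = ⊥ := by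
    rw [eq_bot_iff]
    rintro x ⟨hxN, hxw⟩
    rcases Submodule.mem_span_singleton.1 hxw with ⟨t, rfl⟩
    rcases eq_or_ne t 0 with rfl | ht
    · simp
    · exact absurd (by simpa [smul_smul, inv_mul_cancel₀ ht] using N.smul_mem t⁻¹ hxN) hw
  have h2 := Submodule.finrank_sup_add_finrank_inf_eq N (K ∙ w)
  rw [hinf, finrank_span_singleton hw0] at h2
  simp only [finrank_bot, add_zero] at h2
  omega

lemma exists_notin_of_fr_lt {S X : Submodule K V}
    (h : finrank K ↥S < finrank K ↥X) : ∃ x ∈ X, x ∉ S := by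
  by_contra hc
  push_neg at hc
  exact absurd (Submodule.finrank_mono (fun x hx => hc x hx)) (by omega)

lemma exists_hyperplane_avoid {S X : Submodule K V} {a : V}
    (hSX : S ≤ X) (haX : a ∈ X) (haS : a ∉ S) :
    ∃ D : Submodule K V, S ≤ D ∧ D ≤ X ∧ a ∉ D ∧ finrank K ↥D + 1 = finrank K ↥X := by
  obtain ⟨C, hC⟩ := Submodule.exists_isCompl (S ⊔ (K ∙ a))
  have haD : a ∉ S ⊔ (C ⊓ X) := by
    intro ha
    rcases Submodule.mem_sup.1 ha with ⟨s, hs, c, hc, hsc⟩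
    have hcm : c ∈ (S ⊔ (K ∙ a)) ⊓ C := by
      refine ⟨?_, hc.1⟩
      have hceq : c = a - s := by rw [← hsc]; abel
      rw [hceq]
      exact Submodule.sub_mem _
        (Submodule.mem_sup_right (Submodule.mem_span_singleton_self a))
        (Submodule.mem_sup_left hs)
    rw [hC.inf_eq_bot] at hcm
    have : a = s := by rw [← hsc, hcm]; abel
    exact haS (this ▸ hs)
  refine ⟨S ⊔ (C ⊓ X), le_sup_left, sup_le hSX inf_le_right, haD, ?_⟩
  have hXeq : (S ⊔ (C ⊓ X)) ⊔ (K ∙ a) = X := by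
    apply le_antisymm
    · exact sup_le (sup_le hSX inf_le_right)
        ((Submodule.span_singleton_le_iff_mem a X).2 haX)
    · intro x hx
      have hx' : x ∈ (S ⊔ (K ∙ a)) ⊔ C := by rw [hC.sup_eq_top]; trivial
      rcases Submodule.mem_sup.1 hx' with ⟨y, hy, c, hc, rfl⟩
      rcases Submodule.mem_sup.1 hy with ⟨s, hs, z, hz, rfl⟩
      have hzX : z ∈ X := (Submodule.span_singleton_le_iff_mem a X).2 haX hz
      have hcX : c ∈ C ⊓ X := by
        refine ⟨hc, ?_⟩
        have hce : c = s + z + c - (s + z) := by abel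
        rw [hce]
        exact Submodule.sub_mem _ hx (Submodule.add_mem _ (hSX hs) hzX)
      have hre : s + z + c = s + c + z := by abel
      rw [hre]
      exact Submodule.add_mem _
        (Submodule.add_mem _ (Submodule.mem_sup_left (Submodule.mem_sup_left hs))
          (Submodule.mem_sup_left (Submodule.mem_sup_right hcX)))
        (Submodule.mem_sup_right hz)
  have h3 := fr_sup_span haD
  rw [hXeq] at h3
  omega


/-- Abstract adjacency of `k`-dimensional subspaces. -/
def AdjP (k : ℕ) (X Y : Submodule K V) : Prop :=
  finrank K ↥X = k ∧ finrank K ↥Y = k ∧ finrank K ↥(X ⊓ Y) + 1 = k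

lemma AdjP.ne {k : ℕ} {X Y : Submodule K V} (h : AdjP k X Y) : X ≠ Y := by
  rintro rfl
  rcases h with ⟨h1, -, h3⟩
  rw [inf_idem] at h3
  omega

lemma AdjP.sup_rank {k : ℕ} {X Y : Submodule K V} (h : AdjP k X Y) :
    finrank K ↥(X ⊔ Y) = k + 1 := by
  have := Submodule.finrank_sup_add_finrank_inf_eq X Y
  rcases h with ⟨h1, h2, h3⟩
  omega

/-- The line axiom for a set of `k`-subspaces: every pencil is contained in `H`
or meets it in a unique point. -/
def LineAx (k : ℕ) (H : Set (Submodule K V)) : Prop :=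
  ∀ W T : Submodule K V, finrank K ↥W + 1 = k → finrank K ↥T = k + 1 → W ≤ T →
    (∀ X : Submodule K V, finrank K ↥X = k → W ≤ X → X ≤ T → X ∈ H) ∨
    ∃ X₀ : Submodule K V, (finrank K ↥X₀ = k ∧ W ≤ X₀ ∧ X₀ ≤ T ∧ X₀ ∈ H) ∧
      ∀ X : Submodule K V, finrank K ↥X = k → W ≤ X → X ≤ T → X ∈ H → X = X₀

/-- A step in the complement of `H`. -/
def StepP (k : ℕ) (H : Set (Submodule K V)) (X Y : Submodule K V) : Prop :=
  AdjP k X Y ∧ X ∉ H ∧ Y ∉ H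

/-- T1: the "tangent hyperplane" `{X | ¬(X ⊓ B₁ ≤ N₁)}` meets every pencil in
everything or in exactly one point. -/
lemma pencil_tangent {k : ℕ} {N₁ B₁ M' W T : Submodule K V}
    (hNB : N₁ ≤ B₁) (hB₁M : B₁ ≤ M') (hB₁ : finrank K ↥B₁ = k + 1)
    (hNW : N₁ ≤ W) (hWT : W ≤ T) (hTM : T ≤ M')
    (hW : finrank K ↥W + 1 = k) (hT : finrank K ↥T = k + 1)
    (hdim : finrank K ↥M' + finrank K ↥N₁ ≤ 2 * k + 1) :
    (∀ X : Submodule K V, finrank K ↥X = k → W ≤ X → X ≤ T → ¬(X ⊓ B₁ ≤ N₁)) ∨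
    ∃ X₀ : Submodule K V, (finrank K ↥X₀ = k ∧ W ≤ X₀ ∧ X₀ ≤ T ∧ ¬(X₀ ⊓ B₁ ≤ N₁)) ∧
      ∀ X : Submodule K V, finrank K ↥X = k → W ≤ X → X ≤ T → ¬(X ⊓ B₁ ≤ N₁) → X = X₀ := by
  by_cases hWB : W ⊓ B₁ ≤ N₁
  case neg =>
    left
    intro X _ hWX _ hle
    exact hWB ((inf_le_inf_right B₁ hWX).trans hle)
  case pos =>
    set S := T ⊓ B₁ with hSdef
    have hWS : W ⊓ S ≤ N₁ := fun x hx => hWB ⟨hx.1, hx.2.2⟩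
    have hN₁S : N₁ ≤ S := le_inf (hNW.trans hWT) hNB
    have hWSeq : W ⊓ S = N₁ := le_antisymm hWS (le_inf hNW hN₁S)
    -- dimension of S
    have hTB := Submodule.finrank_sup_add_finrank_inf_eq T B₁
    have hTBM : finrank K ↥(T ⊔ B₁) ≤ finrank K ↥M' :=
      Submodule.finrank_mono (sup_le hTM hB₁M)
    have hSdim : finrank K ↥N₁ + 1 ≤ finrank K ↥S := by rw [hSdef]; omega
    by_cases hTWS : T ≤ W ⊔ S
    case pos =>
      left
      intro X hXk hWX hXT hle
      obtain ⟨x, hxX, hxW⟩ := exists_notin_of_fr_lt (S := W) (X := X) (by omega)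
      rcases Submodule.mem_sup.1 (hTWS (hXT hxX)) with ⟨w, hw, s, hs, hws⟩
      have hsX : s ∈ X := by
        have : s = x - w := by rw [← hws]; abel
        rw [this]; exact X.sub_mem hxX (hWX hw)
      have hsN : s ∈ N₁ := hle ⟨hsX, hs.2⟩
      exact hxW (by rw [← hws]; exact W.add_mem hw (hNW hsN))
    case neg =>
      have hX₀T : W ⊔ S ≤ T := sup_le hWT inf_le_left
      have hX₀lt : W ⊔ S < T := lt_of_le_of_ne hX₀T (fun h => hTWS h.ge)
      have hX₀ltdim : finrank K ↥(W ⊔ S) < finrank K ↥T :=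
        Submodule.finrank_lt_finrank_of_lt hX₀lt
      have hWSsum := Submodule.finrank_sup_add_finrank_inf_eq W S
      rw [hWSeq] at hWSsum
      have hX₀k : finrank K ↥(W ⊔ S) = k := by omega
      obtain ⟨s₀, hs₀S, hs₀N⟩ := exists_notin_of_fr_lt (S := N₁) (X := S) (by omega)
      right
      refine ⟨W ⊔ S, ⟨hX₀k, le_sup_left, hX₀T, fun hle => hs₀N (hle ⟨Submodule.mem_sup_right hs₀S, hs₀S.2⟩)⟩, ?_⟩
      intro X hXk hWX hXT hne
      obtain ⟨x, hxXB, hxN⟩ := SetLike.not_le_iff_exists.1 hne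
      have hxS : x ∈ S := ⟨hXT hxXB.1, hxXB.2⟩
      have hxW : x ∉ W := fun hxw => hxN (hWB ⟨hxw, hxXB.2⟩)
      have h1 : W ⊔ (K ∙ x) ≤ X := sup_le hWX ((Submodule.span_singleton_le_iff_mem x X).2 hxXB.1)
      have h2 : W ⊔ (K ∙ x) ≤ W ⊔ S := sup_le le_sup_left
        ((Submodule.span_singleton_le_iff_mem x _).2 (Submodule.mem_sup_right hxS))
      have hfr : finrank K ↥(W ⊔ (K ∙ x)) = k := by rw [fr_sup_span hxW]; omega
      have e1 : W ⊔ (K ∙ x) = X := Submodule.eq_of_le_of_finrank_le h1 (by omega)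
      have e2 : W ⊔ (K ∙ x) = W ⊔ S := Submodule.eq_of_le_of_finrank_le h2 (by omega)
      rw [← e1, e2]

/-- A step staying in the complement of the tangent hyperplane. -/
def StepT (k : ℕ) (N₁ B₁ M' : Submodule K V) (Z Z' : Submodule K V) : Prop :=
  AdjP k Z Z' ∧ N₁ ≤ Z' ∧ Z' ≤ M' ∧ Z' ⊓ B₁ ≤ N₁

/-- T2: the complement of the tangent hyperplane in a star is connected. -/
lemma tangent_compl_conn {k : ℕ} {N₁ B₁ M' Y : Submodule K V}
    (hN₁B : N₁ ≤ B₁) (hB₁ : finrank K ↥B₁ = k + 1)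
    (hYk : finrank K ↥Y = k) (hN₁Y : N₁ ≤ Y) (hYM : Y ≤ M') (hYB : Y ⊓ B₁ ≤ N₁) :
    ∀ (m : ℕ) (X : Submodule K V), finrank K ↥X = k → N₁ ≤ X → X ≤ M' →
      X ⊓ B₁ ≤ N₁ → k ≤ finrank K ↥(X ⊓ Y) + m →
      ReflTransGen (StepT k N₁ B₁ M') X Y := by
  intro m
  induction m with
  | zero =>
    intro X hXk hN₁X hXM hXB hm
    have h1 : X ⊓ Y = X := Submodule.eq_of_le_of_finrank_le inf_le_left (by omega)
    have h2 : X = Y := Submodule.eq_of_le_of_finrank_le (h1 ▸ inf_le_right) (by omega)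
    exact h2 ▸ ReflTransGen.refl
  | succ m ih =>
    intro X hXk hN₁X hXM hXB hm
    by_cases hXY : X = Y
    · exact hXY ▸ ReflTransGen.refl
    have hfrle : finrank K ↥(X ⊓ Y) ≤ k := hXk ▸ Submodule.finrank_mono inf_le_left
    have hfrne : finrank K ↥(X ⊓ Y) ≠ k := by
      intro h
      have h1 : X ⊓ Y = X := Submodule.eq_of_le_of_finrank_le inf_le_left (by omega)
      exact hXY (Submodule.eq_of_le_of_finrank_le (h1 ▸ inf_le_right) (by omega))
    by_cases hadj : finrank K ↥(X ⊓ Y) + 1 = k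
    · exact ReflTransGen.single ⟨⟨hXk, hYk, hadj⟩, hN₁Y, hYM, hYB⟩
    have h2 : finrank K ↥(X ⊓ Y) + 2 ≤ k := by omega
    obtain ⟨a₀, ha₀X, ha₀XY⟩ := exists_notin_of_fr_lt (S := X ⊓ Y) (X := X) (by omega)
    by_cases hex : ∃ D : Submodule K V, (X ⊓ Y ≤ D ∧ D ≤ X ∧ finrank K ↥D + 1 = k) ∧
        ∃ y ∈ Y, y ∉ D ⊔ B₁
    case pos =>
      obtain ⟨D, ⟨hXYD, hDX, hDk⟩, y, hyY, hyDB⟩ := hex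
      have hyD : y ∉ D := fun h => hyDB (Submodule.mem_sup_left h)
      have hyX : y ∉ X := fun h => hyDB (Submodule.mem_sup_left (hXYD ⟨h, hyY⟩))
      have hfrX' : finrank K ↥(D ⊔ (K ∙ y)) = k := by rw [fr_sup_span hyD]; omega
      have hN₁X' : N₁ ≤ D ⊔ (K ∙ y) :=
        le_trans (le_trans (le_inf hN₁X hN₁Y) hXYD) le_sup_left
      have hX'M : D ⊔ (K ∙ y) ≤ M' :=
        sup_le (hDX.trans hXM) ((Submodule.span_singleton_le_iff_mem _ _).2 (hYM hyY))
      have hX'B : (D ⊔ (K ∙ y)) ⊓ B₁ ≤ N₁ := by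
        rintro x ⟨hx1, hx2⟩
        rcases mem_sup_span hx1 with ⟨d, hd, t, rfl⟩
        rcases eq_or_ne t 0 with rfl | ht
        · simp only [zero_smul, add_zero] at hx2 ⊢
          exact hXB ⟨hDX hd, hx2⟩
        · exfalso
          apply hyDB
          have hy : y = t⁻¹ • ((d + t • y) - d) := by
            rw [add_sub_cancel_left, smul_smul, inv_mul_cancel₀ ht, one_smul]
          rw [hy]
          exact Submodule.smul_mem _ _ (Submodule.sub_mem _
            (Submodule.mem_sup_right hx2) (Submodule.mem_sup_left hd))
      have hXX' : X ⊓ (D ⊔ (K ∙ y)) = D := by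
        apply le_antisymm
        · rintro x ⟨hxX, hxX'⟩
          rcases mem_sup_span hxX' with ⟨d, hd, t, rfl⟩
          rcases eq_or_ne t 0 with rfl | ht
          · simpa using hd
          · exfalso
            apply hyX
            have hy : y = t⁻¹ • ((d + t • y) - d) := by
              rw [add_sub_cancel_left, smul_smul, inv_mul_cancel₀ ht, one_smul]
            rw [hy]
            exact Submodule.smul_mem _ _ (Submodule.sub_mem _ hxX (hDX hd))
        · exact le_inf hDX le_sup_left
      have hadj' : AdjP k X (D ⊔ (K ∙ y)) := ⟨hXk, hfrX', by rw [hXX']; omega⟩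
      have hsub : (X ⊓ Y) ⊔ (K ∙ y) ≤ (D ⊔ (K ∙ y)) ⊓ Y :=
        le_inf (sup_le (hXYD.trans le_sup_left) le_sup_right)
          (sup_le inf_le_right ((Submodule.span_singleton_le_iff_mem _ _).2 hyY))
      have hyXY : y ∉ X ⊓ Y := fun h => hyX h.1
      have hfrsub : finrank K ↥((X ⊓ Y) ⊔ (K ∙ y)) = finrank K ↥(X ⊓ Y) + 1 :=
        fr_sup_span hyXY
      have hmono := Submodule.finrank_mono hsub
      exact ReflTransGen.head ⟨hadj', hN₁X', hX'M, hX'B⟩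
        (ih _ hfrX' hN₁X' hX'M hX'B (by omega))
    case neg =>
      exfalso
      push_neg at hex
      obtain ⟨D₁, hXYD₁, hD₁X, ha₀D₁, hD₁k'⟩ :=
        exists_hyperplane_avoid (inf_le_left : X ⊓ Y ≤ X) ha₀X ha₀XY
      have hYle : Y ≤ (X ⊓ Y) ⊔ B₁ := by
        intro y hy
        have h1 := hex D₁ ⟨hXYD₁, hD₁X, by omega⟩ y hy
        rcases Submodule.mem_sup.1 h1 with ⟨d₁, hd₁, β₁, hβ₁, hyd⟩
        have hd₁XY : d₁ ∈ X ⊓ Y := by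
          by_contra hd₁n
          obtain ⟨D₂, hXYD₂, hD₂X, hd₁D₂, hD₂k'⟩ :=
            exists_hyperplane_avoid (inf_le_left : X ⊓ Y ≤ X) (hD₁X hd₁) hd₁n
          have h2 := hex D₂ ⟨hXYD₂, hD₂X, by omega⟩ y hy
          rcases Submodule.mem_sup.1 h2 with ⟨d₂, hd₂, β₂, hβ₂, hyd₂⟩
          have hdd : d₁ - d₂ ∈ X ⊓ B₁ := by
            refine ⟨Submodule.sub_mem _ (hD₁X hd₁) (hD₂X hd₂), ?_⟩
            have hsum : d₁ + β₁ = d₂ + β₂ := hyd.trans hyd₂.symm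
            have heq : d₁ - d₂ = β₂ - β₁ := by
              rw [sub_eq_sub_iff_add_eq_add]
              exact hsum.trans (add_comm _ _)
            rw [heq]
            exact Submodule.sub_mem _ hβ₂ hβ₁
          have hN : d₁ - d₂ ∈ N₁ := hXB hdd
          apply hd₁D₂
          have : d₁ = d₂ + (d₁ - d₂) := by abel
          rw [this]
          exact Submodule.add_mem _ hd₂ (hXYD₂ ((le_inf hN₁X hN₁Y) hN))
        rw [← hyd]
        exact Submodule.add_mem _ (Submodule.mem_sup_left hd₁XY) (Submodule.mem_sup_right hβ₁)
      have hYB₁eq : Y ⊓ B₁ = N₁ := le_antisymm hYB (le_inf hN₁Y hN₁B)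
      have hXYB₁eq : (X ⊓ Y) ⊓ B₁ = N₁ := by
        apply le_antisymm
        · exact fun x hx => hYB ⟨hx.1.2, hx.2⟩
        · exact le_inf (le_inf hN₁X hN₁Y) hN₁B
      have e1 := Submodule.finrank_sup_add_finrank_inf_eq Y B₁
      have e2 := Submodule.finrank_sup_add_finrank_inf_eq (X ⊓ Y) B₁
      rw [hYB₁eq] at e1
      rw [hXYB₁eq] at e2
      have e3 : finrank K ↥(Y ⊔ B₁) ≤ finrank K ↥((X ⊓ Y) ⊔ B₁) :=
        Submodule.finrank_mono (sup_le hYle le_sup_right)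
      omega

/-- Bridge: for a star point `Z ⊇ N ⊔ ⟨w⟩`, meeting `B₁ = P ⊔ ⟨w⟩` beyond
`N₁ = N ⊔ ⟨w⟩` is the same as meeting `P` beyond `N`. -/
lemma bridge_mp {N P : Submodule K V} {w : V} (hNP : N ≤ P) (hwP : w ∉ P)
    {Z : Submodule K V} (hZ : N ⊔ (K ∙ w) ≤ Z) (hZP : Z ⊓ P ≤ N) :
    Z ⊓ (P ⊔ (K ∙ w)) ≤ N ⊔ (K ∙ w) := by
  rintro x ⟨hxZ, hxB⟩
  rcases Submodule.mem_sup.1 hxB with ⟨p, hp, z, hz, hxe⟩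
  have hzZ : z ∈ Z := hZ (Submodule.mem_sup_right hz)
  have hpZ : p ∈ Z := by
    have : p = x - z := by rw [← hxe]; abel
    rw [this]; exact Z.sub_mem hxZ hzZ
  have hpN : p ∈ N := hZP ⟨hpZ, hp⟩
  rw [← hxe]
  exact Submodule.add_mem _ (Submodule.mem_sup_left hpN) (Submodule.mem_sup_right hz)

lemma bridge_mpr {N P : Submodule K V} {w : V} (hNP : N ≤ P) (hwP : w ∉ P)
    {Z : Submodule K V} (hZB : Z ⊓ (P ⊔ (K ∙ w)) ≤ N ⊔ (K ∙ w)) :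
    Z ⊓ P ≤ N := by
  rintro x ⟨hxZ, hxP⟩
  have hx : x ∈ N ⊔ (K ∙ w) := hZB ⟨hxZ, Submodule.mem_sup_left hxP⟩
  rcases mem_sup_span hx with ⟨n, hn, t, hxe⟩
  rcases eq_or_ne t 0 with rfl | ht
  · rw [hxe]; simpa using hn
  · exfalso
    apply hwP
    have hw : w = t⁻¹ • (x - n) := by
      rw [hxe, add_sub_cancel_left, smul_smul, inv_mul_cancel₀ ht, one_smul]
    rw [hw]
    exact Submodule.smul_mem _ _ (P.sub_mem hxP (hNP hn))

/-- The rule lemma: if every non-`H` point of the star through `w` misses `P`,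
then membership in `H` on that star is *equivalent* to meeting `P`. -/
lemma rule {k : ℕ} {H : Set (Submodule K V)} (hax : LineAx k H)
    {N P M' E : Submodule K V} {w : V}
    (hPk : finrank K ↥P = k) (hwP : w ∉ P) (hwM : w ∈ M') (hPM : P ≤ M')
    (hNP : N ≤ P)
    (hdim : finrank K ↥M' + finrank K ↥N ≤ 2 * k)
    (hEk : finrank K ↥E = k) (hNwE : N ⊔ (K ∙ w) ≤ E) (hEM : E ≤ M')
    (hEP : E ⊓ P ≤ N) (hEH : E ∉ H)
    (hfail : ∀ Z : Submodule K V, finrank K ↥Z = k → N ⊔ (K ∙ w) ≤ Z → Z ≤ M' →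
      ¬(Z ⊓ P ≤ N) → Z ∈ H) :
    ∀ Z : Submodule K V, finrank K ↥Z = k → N ⊔ (K ∙ w) ≤ Z → Z ≤ M' →
      (Z ∈ H ↔ ¬(Z ⊓ P ≤ N)) := by
  have hwN : w ∉ N := fun h => hwP (hNP h)
  set N₁ := N ⊔ (K ∙ w) with hN₁def
  set B₁ := P ⊔ (K ∙ w) with hB₁def
  have hN₁fr : finrank K ↥N₁ = finrank K ↥N + 1 := fr_sup_span hwN
  have hB₁fr : finrank K ↥B₁ = k + 1 := by rw [hB₁def, fr_sup_span hwP, hPk]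
  have hN₁B₁ : N₁ ≤ B₁ := sup_le_sup_right hNP _
  have hB₁M : B₁ ≤ M' := sup_le hPM ((Submodule.span_singleton_le_iff_mem _ _).2 hwM)
  intro Z hZk hZN₁ hZM
  refine ⟨?_, hfail Z hZk hZN₁ hZM⟩
  intro hZH
  by_contra hZP'
  have hZP : Z ⊓ P ≤ N := hZP'
  -- chain from Z to E in the complement of the tangent hyperplane
  have hZB : Z ⊓ B₁ ≤ N₁ := bridge_mp hNP hwP hZN₁ hZP
  have hEB : E ⊓ B₁ ≤ N₁ := bridge_mp hNP hwP hNwE hEP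
  have hchain := tangent_compl_conn (M' := M') hN₁B₁ hB₁fr hEk hNwE hEM hEB
    k Z hZk hZN₁ hZM hZB (by omega)
  -- propagate membership in H along the chain
  suffices hprop : ∀ X Y : Submodule K V, ReflTransGen (StepT k N₁ B₁ M') X Y →
      (X ∈ H ∧ finrank K ↥X = k ∧ N₁ ≤ X ∧ X ≤ M' ∧ X ⊓ B₁ ≤ N₁) →
      (Y ∈ H ∧ finrank K ↥Y = k ∧ N₁ ≤ Y ∧ Y ≤ M' ∧ Y ⊓ B₁ ≤ N₁) by
    exact hEH (hprop Z E hchain ⟨hZH, hZk, hZN₁, hZM, hZB⟩).1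
  intro X Y hXY
  induction hXY with
  | refl => exact id
  | tail hab hstep ih =>
    rename_i b c
    intro hX
    obtain ⟨hbH, hbk, hN₁b, hbM, hbB⟩ := ih hX
    obtain ⟨hadj, hN₁c, hcM, hcB⟩ := hstep
    refine ⟨?_, hadj.2.1, hN₁c, hcM, hcB⟩
    have hNW : N₁ ≤ b ⊓ c := le_inf hN₁b hN₁c
    have hWT : b ⊓ c ≤ b ⊔ c := inf_le_left.trans le_sup_left
    have hTM : b ⊔ c ≤ M' := sup_le hbM hcM
    have hT1 := pencil_tangent hN₁B₁ hB₁M hB₁fr hNW hWT hTM hadj.2.2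
      hadj.sup_rank (by omega)
    rcases hT1 with hall | ⟨X₀, ⟨hX₀k, hWX₀, hX₀T, hX₀t⟩, _⟩
    · exact absurd hbB (hall b hbk inf_le_left le_sup_left)
    · have hN₁X₀ : N₁ ≤ X₀ := hNW.trans hWX₀
      have hX₀H : X₀ ∈ H := hfail X₀ hX₀k hN₁X₀ (hX₀T.trans hTM)
        (fun hP => hX₀t (bridge_mp hNP hwP hN₁X₀ hP))
      have hX₀b : X₀ ≠ b := fun h => hX₀t (h ▸ hbB)
      rcases hax (b ⊓ c) (b ⊔ c) hadj.2.2 hadj.sup_rank hWT with hall' | ⟨Y₀, hY₀, huniq'⟩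
      · exact hall' c hadj.2.1 inf_le_right le_sup_right
      · exact absurd ((huniq' b hbk inf_le_left le_sup_left hbH).trans
          (huniq' X₀ hX₀k hWX₀ hX₀T hX₀H).symm) (Ne.symm hX₀b)

/-- The span-membership helper. -/
lemma spanle {X : Submodule K V} {v : V} (h : v ∈ X) : (K ∙ v) ≤ X :=
  (Submodule.span_singleton_le_iff_mem _ _).2 h

/-- MASTER: connectivity of the complement of `H` for points over a base `N`. -/
lemma master {k : ℕ} {H : Set (Submodule K V)} (hax : LineAx k H) :
    ∀ (r : ℕ) (N A B : Submodule K V), finrank K ↥N + r = k → N ≤ A → N ≤ B →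
      finrank K ↥A = k → finrank K ↥B = k → A ∉ H → B ∉ H →
      ReflTransGen (StepP k H) A B := by
  intro r
  induction r with
  | zero =>
    intro N A B hNr hNA hNB hAk hBk _ _
    have h1 : N = A := Submodule.eq_of_le_of_finrank_le hNA (by omega)
    have h2 : N = B := Submodule.eq_of_le_of_finrank_le hNB (by omega)
    exact (h1.symm.trans h2) ▸ ReflTransGen.refl
  | succ r ihr =>
    intro N A B hNr hNA hNB hAk hBk hAH hBH
    by_cases hAB : A = B
    · exact hAB ▸ ReflTransGen.refl
    by_cases hv : ∃ v ∈ (A ⊓ B : Submodule K V), v ∉ N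
    · obtain ⟨v, hvAB, hvN⟩ := hv
      exact ihr (N ⊔ (K ∙ v)) A B (by rw [fr_sup_span hvN]; omega)
        (sup_le hNA (spanle hvAB.1)) (sup_le hNB (spanle hvAB.2)) hAk hBk hAH hBH
    push_neg at hv
    have hABN : A ⊓ B = N := le_antisymm (fun x hx => hv x hx) (le_inf hNA hNB)
    cases r with
    | zero =>
      exact ReflTransGen.single ⟨⟨hAk, hBk, by rw [hABN]; omega⟩, hAH, hBH⟩
    | succ r' =>
      have hMA : A ≤ A ⊔ B := le_sup_left
      have hMB : B ≤ A ⊔ B := le_sup_right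
      have hMsum := Submodule.finrank_sup_add_finrank_inf_eq A B
      rw [hABN] at hMsum
      have hdim : finrank K ↥(A ⊔ B) + finrank K ↥N ≤ 2 * k := by omega
      obtain ⟨a₁, ha₁A, ha₁N⟩ := exists_notin_of_fr_lt (S := N) (X := A) (by omega)
      obtain ⟨a₂, ha₂A, ha₂Na₁⟩ := exists_notin_of_fr_lt (S := N ⊔ (K ∙ a₁)) (X := A)
        (by rw [fr_sup_span ha₁N]; omega)
      obtain ⟨b₁, hb₁B, hb₁N⟩ := exists_notin_of_fr_lt (S := N) (X := B) (by omega)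
      obtain ⟨b₂, hb₂B, hb₂Nb₁⟩ := exists_notin_of_fr_lt (S := N ⊔ (K ∙ b₁)) (X := B)
        (by rw [fr_sup_span hb₁N]; omega)
      have ha₁B : a₁ ∉ B := fun h => ha₁N (hABN ▸ (⟨ha₁A, h⟩ : a₁ ∈ A ⊓ B))
      have hb₁A : b₁ ∉ A := fun h => hb₁N (hABN ▸ (⟨h, hb₁B⟩ : b₁ ∈ A ⊓ B))
      have ha₂B : a₂ ∉ B := fun h =>
        ha₂Na₁ (Submodule.mem_sup_left (hABN ▸ (⟨ha₂A, h⟩ : a₂ ∈ A ⊓ B)))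
      have hb₂A : b₂ ∉ A := fun h =>
        hb₂Nb₁ (Submodule.mem_sup_left (hABN ▸ (⟨h, hb₂B⟩ : b₂ ∈ A ⊓ B)))
      obtain ⟨DA, hNa₁DA, hDAA, ha₂DA, hDAfr⟩ :=
        exists_hyperplane_avoid (sup_le hNA (spanle ha₁A)) ha₂A ha₂Na₁
      obtain ⟨DB, hNb₁DB, hDBB, hb₂DB, hDBfr⟩ :=
        exists_hyperplane_avoid (sup_le hNB (spanle hb₁B)) hb₂B hb₂Nb₁
      have hNDA : N ≤ DA := le_sup_left.trans hNa₁DA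
      have hNDB : N ≤ DB := le_sup_left.trans hNb₁DB
      have hv'A : a₂ + b₂ ∉ A := fun h => hb₂A (by
        have he : b₂ = (a₂ + b₂) - a₂ := by abel
        rw [he]; exact A.sub_mem h ha₂A)
      have hv'B : a₂ + b₂ ∉ B := fun h => ha₂B (by
        have he : a₂ = (a₂ + b₂) - b₂ := by abel
        rw [he]; exact B.sub_mem h hb₂B)
      have hv'N : a₂ + b₂ ∉ N := fun h => hv'A (hNA h)
      have hv'M : a₂ + b₂ ∈ A ⊔ B :=
        Submodule.add_mem _ (Submodule.mem_sup_left ha₂A) (Submodule.mem_sup_right hb₂B)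
      have hv'DA : a₂ + b₂ ∉ DA := fun h => hv'A (hDAA h)
      have hv'DB : a₂ + b₂ ∉ DB := fun h => hv'B (hDBB h)
      -- the point X
      have hXk : finrank K ↥(DA ⊔ (K ∙ (a₂ + b₂))) = k := by rw [fr_sup_span hv'DA]; omega
      have hNa₁X : N ⊔ (K ∙ a₁) ≤ DA ⊔ (K ∙ (a₂ + b₂)) := hNa₁DA.trans le_sup_left
      have hNv'X : N ⊔ (K ∙ (a₂ + b₂)) ≤ DA ⊔ (K ∙ (a₂ + b₂)) :=
        sup_le (hNDA.trans le_sup_left) le_sup_right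
      have hXM : DA ⊔ (K ∙ (a₂ + b₂)) ≤ A ⊔ B := sup_le (hDAA.trans hMA) (spanle hv'M)
      have hXB : (DA ⊔ (K ∙ (a₂ + b₂))) ⊓ B ≤ N := by
        rintro x ⟨hxX, hxB⟩
        rcases mem_sup_span hxX with ⟨d, hd, t, rfl⟩
        have h1 : d + t • a₂ ∈ A := A.add_mem (hDAA hd) (A.smul_mem t ha₂A)
        have h2 : d + t • a₂ ∈ B := by
          have he : d + t • a₂ = (d + t • (a₂ + b₂)) - t • b₂ := by
            rw [smul_add]; abel
          rw [he]; exact B.sub_mem hxB (B.smul_mem t hb₂B)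
        have h3 : d + t • a₂ ∈ N := hABN ▸ (⟨h1, h2⟩ : _ ∈ A ⊓ B)
        have h4 : t • a₂ ∈ DA := by
          have he : t • a₂ = (d + t • a₂) - d := by abel
          rw [he]; exact DA.sub_mem (hNDA h3) hd
        have ht : t = 0 := by
          by_contra ht
          refine ha₂DA ?_
          have he : a₂ = t⁻¹ • (t • a₂) := by
            rw [smul_smul, inv_mul_cancel₀ ht, one_smul]
          rw [he]; exact DA.smul_mem _ h4
        rw [ht, zero_smul, add_zero] at hxB ⊢
        exact hABN ▸ (⟨hDAA hd, hxB⟩ : _ ∈ A ⊓ B)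
      -- the point Y
      have hYk : finrank K ↥(DB ⊔ (K ∙ (a₂ + b₂))) = k := by rw [fr_sup_span hv'DB]; omega
      have hNb₁Y : N ⊔ (K ∙ b₁) ≤ DB ⊔ (K ∙ (a₂ + b₂)) := hNb₁DB.trans le_sup_left
      have hNv'Y : N ⊔ (K ∙ (a₂ + b₂)) ≤ DB ⊔ (K ∙ (a₂ + b₂)) :=
        sup_le (hNDB.trans le_sup_left) le_sup_right
      have hYM : DB ⊔ (K ∙ (a₂ + b₂)) ≤ A ⊔ B := sup_le (hDBB.trans hMB) (spanle hv'M)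
      have hYA : (DB ⊔ (K ∙ (a₂ + b₂))) ⊓ A ≤ N := by
        rintro x ⟨hxY, hxA⟩
        rcases mem_sup_span hxY with ⟨d, hd, t, rfl⟩
        have h1 : d + t • b₂ ∈ B := B.add_mem (hDBB hd) (B.smul_mem t hb₂B)
        have h2 : d + t • b₂ ∈ A := by
          have he : d + t • b₂ = (d + t • (a₂ + b₂)) - t • a₂ := by
            rw [smul_add]; abel
          rw [he]; exact A.sub_mem hxA (A.smul_mem t ha₂A)
        have h3 : d + t • b₂ ∈ N := hABN ▸ (⟨h2, h1⟩ : _ ∈ A ⊓ B)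
        have h4 : t • b₂ ∈ DB := by
          have he : t • b₂ = (d + t • b₂) - d := by abel
          rw [he]; exact DB.sub_mem (hNDB h3) hd
        have ht : t = 0 := by
          by_contra ht
          refine hb₂DB ?_
          have he : b₂ = t⁻¹ • (t • b₂) := by
            rw [smul_smul, inv_mul_cancel₀ ht, one_smul]
          rw [he]; exact DB.smul_mem _ h4
        rw [ht, zero_smul, add_zero] at hxA ⊢
        exact hABN ▸ (⟨hxA, hDBB hd⟩ : _ ∈ A ⊓ B)
      have hb₁Y : b₁ ∈ DB ⊔ (K ∙ (a₂ + b₂)) :=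
        Submodule.mem_sup_left (hNb₁DB (Submodule.mem_sup_right (Submodule.mem_span_singleton_self b₁)))
      have hYBne : ¬((DB ⊔ (K ∙ (a₂ + b₂))) ⊓ B ≤ N) := fun h => hb₁N (h ⟨hb₁Y, hb₁B⟩)
      have ha₁M : a₁ ∈ A ⊔ B := Submodule.mem_sup_left ha₁A
      have hb₁M : b₁ ∈ A ⊔ B := Submodule.mem_sup_right hb₁B
      -- Case analysis on the three failure conditions
      by_cases hF₁ : ∀ Z : Submodule K V, finrank K ↥Z = k → N ⊔ (K ∙ a₁) ≤ Z →
          Z ≤ A ⊔ B → ¬(Z ⊓ B ≤ N) → Z ∈ H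
      case neg =>
        push_neg at hF₁
        obtain ⟨Z, hZk, hZa₁, hZM, hZB, hZH⟩ := hF₁
        obtain ⟨v'', hv''ZB, hv''N⟩ := SetLike.not_le_iff_exists.1 hZB
        refine ReflTransGen.trans
          (ihr (N ⊔ (K ∙ a₁)) A Z (by rw [fr_sup_span ha₁N]; omega)
            (sup_le hNA (spanle ha₁A)) hZa₁ hAk hZk hAH hZH)
          (ihr (N ⊔ (K ∙ v'')) Z B (by rw [fr_sup_span hv''N]; omega)
            (sup_le (le_sup_left.trans hZa₁) (spanle hv''ZB.1))
            (sup_le hNB (spanle hv''ZB.2)) hZk hBk hZH hBH)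
      case pos =>
      have rule₁ := rule hax hBk ha₁B ha₁M hMB hNB hdim hAk
        (sup_le hNA (spanle ha₁A)) hMA (le_of_eq hABN) hAH hF₁
      have hXH : DA ⊔ (K ∙ (a₂ + b₂)) ∉ H := fun h =>
        ((rule₁ _ hXk hNa₁X hXM).1 h) hXB
      by_cases hF₂ : ∀ Z : Submodule K V, finrank K ↥Z = k → N ⊔ (K ∙ b₁) ≤ Z →
          Z ≤ A ⊔ B → ¬(Z ⊓ A ≤ N) → Z ∈ H
      case neg =>
        push_neg at hF₂
        obtain ⟨Z, hZk, hZb₁, hZM, hZA, hZH⟩ := hF₂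
        obtain ⟨v₃, hv₃ZA, hv₃N⟩ := SetLike.not_le_iff_exists.1 hZA
        refine ReflTransGen.trans
          (ihr (N ⊔ (K ∙ v₃)) A Z (by rw [fr_sup_span hv₃N]; omega)
            (sup_le hNA (spanle hv₃ZA.2))
            (sup_le (le_sup_left.trans hZb₁) (spanle hv₃ZA.1)) hAk hZk hAH hZH)
          (ihr (N ⊔ (K ∙ b₁)) Z B (by rw [fr_sup_span hb₁N]; omega)
            hZb₁ (sup_le hNB (spanle hb₁B)) hZk hBk hZH hBH)
      case pos =>
      have rule₂ := rule hax hAk hb₁A hb₁M hMA hNA hdim hBk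
        (sup_le hNB (spanle hb₁B)) hMB (by rw [inf_comm]; exact le_of_eq hABN) hBH hF₂
      by_cases hF₃ : ∀ Z : Submodule K V, finrank K ↥Z = k → N ⊔ (K ∙ (a₂ + b₂)) ≤ Z →
          Z ≤ A ⊔ B → ¬(Z ⊓ B ≤ N) → Z ∈ H
      case neg =>
        push_neg at hF₃
        obtain ⟨Z, hZk, hZv', hZM, hZB, hZH⟩ := hF₃
        obtain ⟨v₄, hv₄ZB, hv₄N⟩ := SetLike.not_le_iff_exists.1 hZB
        refine ReflTransGen.trans
          (ihr (N ⊔ (K ∙ a₁)) A (DA ⊔ (K ∙ (a₂ + b₂))) (by rw [fr_sup_span ha₁N]; omega)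
            (sup_le hNA (spanle ha₁A)) hNa₁X hAk hXk hAH hXH)
          (ReflTransGen.trans
            (ihr (N ⊔ (K ∙ (a₂ + b₂))) (DA ⊔ (K ∙ (a₂ + b₂))) Z
              (by rw [fr_sup_span hv'N]; omega) hNv'X hZv' hXk hZk hXH hZH)
            (ihr (N ⊔ (K ∙ v₄)) Z B (by rw [fr_sup_span hv₄N]; omega)
              (sup_le (le_sup_left.trans hZv') (spanle hv₄ZB.1))
              (sup_le hNB (spanle hv₄ZB.2)) hZk hBk hZH hBH))
      case pos =>
        exfalso
        have rule₃ := rule hax hBk hv'B hv'M hMB hNB hdim hXk hNv'X hXM hXB hXH hF₃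
        have hYH : DB ⊔ (K ∙ (a₂ + b₂)) ∈ H :=
          (rule₃ _ hYk hNv'Y hYM).2 hYBne
        exact ((rule₂ _ hYk hNb₁Y hYM).1 hYH) hYA

end Stmt12

open Module Submodule Relation

/-- every geometric hyperplane of the Grassmann geometry is a
maximal subspace; equivalently, the collinearity graph induced on its
complement is connected. -/
theorem stmt_12 (K : Type*) [Field K] (n k : ℕ) (h1 : 1 ≤ k) (h2 : k ≤ n - 1)
    (G : PointLineGeometry (GrassPts K n k)) (hG : G.lines = grassLines K n k)
    (H : Set (GrassPts K n k)) (hH : G.IsGeomHyperplane H) :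
    G.IsMaxSubspace H ∧ ((G.collGraph).induce Hᶜ).Connected := by
  classical
  set H' : Set (Submodule K (Fin n → K)) :=
    {W | ∃ h : Module.finrank K ↥W = k, (⟨W, h⟩ : GrassPts K n k) ∈ H} with hH'def
  have memH' : ∀ p : GrassPts K n k, p.1 ∈ H' ↔ p ∈ H := by
    intro p
    constructor
    · rintro ⟨h, hp⟩
      have he : (⟨p.1, h⟩ : GrassPts K n k) = p := Subtype.ext rfl
      rwa [he] at hp
    · intro hp
      exact ⟨p.2, (show (⟨p.1, p.2⟩ : GrassPts K n k) = p from rfl) ▸ hp⟩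
  have hax : Stmt12.LineAx k H' := by
    intro W T hW hT hWT
    have hl : {X : GrassPts K n k | W ≤ X.1 ∧ X.1 ≤ T} ∈ G.lines := by
      rw [hG]; exact ⟨W, T, by omega, hT, hWT, rfl⟩
    rcases hH.2.2 _ hl with hsub | ⟨p, ⟨⟨hp1, hp2⟩, hpH⟩, hpuniq⟩
    · left
      intro X hXk hWX hXT
      exact (memH' ⟨X, hXk⟩).2 (hsub ⟨hWX, hXT⟩)
    · right
      refine ⟨p.1, ⟨p.2, hp1, hp2, (memH' p).2 hpH⟩, ?_⟩
      intro X hXk hWX hXT hXH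
      exact congrArg Subtype.val
        (hpuniq ⟨X, hXk⟩ ⟨⟨hWX, hXT⟩, (memH' ⟨X, hXk⟩).1 hXH⟩)
  have hchain : ∀ p q : GrassPts K n k, p ∉ H → q ∉ H →
      Relation.ReflTransGen (Stmt12.StepP k H') p.1 q.1 := by
    intro p q hp hq
    exact Stmt12.master hax k ⊥ p.1 q.1 (by rw [finrank_bot]; omega) bot_le bot_le p.2 q.2
      (fun h => hp ((memH' p).1 h)) (fun h => hq ((memH' q).1 h))
  have hadjG : ∀ (X Y : Submodule K (Fin n → K)) (hX : Module.finrank K ↥X = k)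
      (hY : Module.finrank K ↥Y = k), Stmt12.AdjP k X Y →
      G.collGraph.Adj ⟨X, hX⟩ ⟨Y, hY⟩ := by
    intro X Y hX hY hadj
    refine ⟨fun h => hadj.ne (congrArg Subtype.val h), ?_⟩
    refine ⟨{Z : GrassPts K n k | X ⊓ Y ≤ Z.1 ∧ Z.1 ≤ X ⊔ Y}, ?_,
      ⟨inf_le_left, le_sup_left⟩, ⟨inf_le_right, le_sup_right⟩⟩
    rw [hG]
    exact ⟨X ⊓ Y, X ⊔ Y, by have := hadj.2.2; omega, hadj.sup_rank,
      inf_le_left.trans le_sup_left, rfl⟩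
  have hconn : ((G.collGraph).induce Hᶜ).Connected := by
    obtain ⟨p₀, hp₀⟩ := (Set.ne_univ_iff_exists_notMem H).1 hH.2.1
    rw [SimpleGraph.connected_iff]
    refine ⟨?_, ⟨⟨p₀, hp₀⟩⟩⟩
    suffices hgen : ∀ (Xs Ys : Submodule K (Fin n → K)),
        Relation.ReflTransGen (Stmt12.StepP k H') Xs Ys →
        ∀ (hXk : Module.finrank K ↥Xs = k) (hYk : Module.finrank K ↥Ys = k)
          (hXc : (⟨Xs, hXk⟩ : GrassPts K n k) ∈ Hᶜ)
          (hYc : (⟨Ys, hYk⟩ : GrassPts K n k) ∈ Hᶜ),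
          ((G.collGraph).induce Hᶜ).Reachable ⟨⟨Xs, hXk⟩, hXc⟩ ⟨⟨Ys, hYk⟩, hYc⟩ by
      rintro ⟨⟨Xu, hXu⟩, hu⟩ ⟨⟨Xv, hXv⟩, hv⟩
      exact hgen Xu Xv (hchain ⟨Xu, hXu⟩ ⟨Xv, hXv⟩ hu hv) hXu hXv hu hv
    intro Xs Ys hRT
    induction hRT with
    | refl =>
      intro hXk hYk hXc hYc
      exact SimpleGraph.Reachable.refl _
    | tail hab hstep ih =>
      rename_i b c
      intro hXk hck hXc hcc
      have hbk : Module.finrank K ↥b = k := hstep.1.1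
      have hbc : (⟨b, hbk⟩ : GrassPts K n k) ∈ Hᶜ := fun h => hstep.2.1 ((memH' _).2 h)
      exact (ih hXk hbk hXc hbc).trans
        (SimpleGraph.Adj.reachable (hadjG b c hbk hck hstep.1))
  refine ⟨⟨hH.1, hH.2.1, ?_⟩, hconn⟩
  intro Xset hXsub hHX
  rw [Set.eq_univ_iff_forall]
  intro q
  by_cases hqH : q ∈ H
  · exact hHX.subset hqH
  · obtain ⟨p, hpX, hpH⟩ := Set.exists_of_ssubset hHX
    have chain := hchain p q hpH hqH
    suffices hgen2 : ∀ (Zs : Submodule K (Fin n → K)),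
        Relation.ReflTransGen (Stmt12.StepP k H') p.1 Zs →
        ∀ (hZk : Module.finrank K ↥Zs = k), (⟨Zs, hZk⟩ : GrassPts K n k) ∈ Xset by
      exact hgen2 q.1 chain q.2
    intro Zs hRT
    induction hRT with
    | refl =>
      intro hZk
      have hpe : (⟨p.1, hZk⟩ : GrassPts K n k) = p := Subtype.ext rfl
      rw [hpe]
      exact hpX
    | tail hab hstep ih =>
      rename_i b c
      intro hck
      have hbk : Module.finrank K ↥b = k := hstep.1.1
      have hbX : (⟨b, hbk⟩ : GrassPts K n k) ∈ Xset := ih hbk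
      have hl : {Z : GrassPts K n k | b ⊓ c ≤ Z.1 ∧ Z.1 ≤ b ⊔ c} ∈ G.lines := by
        rw [hG]
        exact ⟨b ⊓ c, b ⊔ c, by have := hstep.1.2.2; omega, hstep.1.sup_rank,
          inf_le_left.trans le_sup_left, rfl⟩
      have hbl : (⟨b, hbk⟩ : GrassPts K n k) ∈
          {Z : GrassPts K n k | b ⊓ c ≤ Z.1 ∧ Z.1 ≤ b ⊔ c} := ⟨inf_le_left, le_sup_left⟩
      have hcl : (⟨c, hck⟩ : GrassPts K n k) ∈
          {Z : GrassPts K n k | b ⊓ c ≤ Z.1 ∧ Z.1 ≤ b ⊔ c} := ⟨inf_le_right, le_sup_right⟩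
      have hbH : (⟨b, hbk⟩ : GrassPts K n k) ∉ H := fun h => hstep.2.1 ((memH' _).2 h)
      rcases hH.2.2 _ hl with hsub | ⟨z, hz, huniq⟩
      · exact absurd (hsub hbl) hbH
      · have hzX : z ∈ Xset := hHX.subset hz.2
        have hzb : z ≠ (⟨b, hbk⟩ : GrassPts K n k) := fun h => hbH (h ▸ hz.2)
        have hlX : {Z : GrassPts K n k | b ⊓ c ≤ Z.1 ∧ Z.1 ≤ b ⊔ c} ⊆ Xset :=
          hXsub.2 _ hl ⟨z, ⟨hz.1, hzX⟩, ⟨b, hbk⟩, ⟨hbl, hbX⟩, hzb⟩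
        exact hlX hcl
end

section
/- The Segre code C(S_{m,n}) over F_q, arising from the Segre variety S_{m,n} ⊆ PG(F_q^{m+1} ⊗ F_q^{n+1}), has length N = ((q^{m+1}−1)(q^{n+1}−1))/(q−1)², dimension (m+1)(n+1), and is a minimal code. -/
open TensorProduct Module Projectivization
open scoped LinearAlgebra.Projectivization

section Aux
variable {K V₁ V₂ : Type*} [Field K] [AddCommGroup V₁] [Module K V₁]
  [AddCommGroup V₂] [Module K V₂]

lemma exists_dual_eq_one {v : V₁} (hv : v ≠ 0) : ∃ f : Module.Dual K V₁, f v = 1 := by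
  have h : ¬ ∀ φ : Module.Dual K V₁, φ v = 0 := by
    rw [Module.forall_dual_apply_eq_zero_iff]; exact hv
  push_neg at h
  obtain ⟨f, hf⟩ := h
  exact ⟨(f v)⁻¹ • f, by simp [inv_mul_cancel₀ hf]⟩

lemma tmul_ne_zero' {p : V₁} {r : V₂} (hp : p ≠ 0) (hr : r ≠ 0) :
    p ⊗ₜ[K] r ≠ 0 := by
  obtain ⟨f, hf⟩ := exists_dual_eq_one (K := K) hp
  obtain ⟨g, hg⟩ := exists_dual_eq_one (K := K) hr
  intro h
  have := congrArg ((TensorProduct.lid K K).toLinearMap.comp (TensorProduct.map f g)) h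
  simp [hf, hg] at this

lemma pure_smul_decomp {p p₀ : V₁} {r r₀ : V₂} (hp : p ≠ 0) (hr : r ≠ 0)
    (d : K) (h : p ⊗ₜ[K] r = d • (p₀ ⊗ₜ[K] r₀)) :
    (∃ a : K, a ≠ 0 ∧ p = a • p₀) ∧ (∃ b : K, b ≠ 0 ∧ r = b • r₀) := by
  obtain ⟨f, hf⟩ := exists_dual_eq_one (K := K) hp
  obtain ⟨g, hg⟩ := exists_dual_eq_one (K := K) hr
  constructor
  · have := congrArg ((TensorProduct.rid K V₁).toLinearMap.comp
      (TensorProduct.map (LinearMap.id) g)) h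
    simp [hg] at this
    refine ⟨d * g r₀, fun hz => ?_, by simpa [smul_smul] using this⟩
    rw [smul_smul, hz] at this; simp at this; exact hp this
  · have := congrArg ((TensorProduct.lid K V₂).toLinearMap.comp
      (TensorProduct.map f (LinearMap.id))) h
    simp [hf] at this
    refine ⟨d * f p₀, fun hz => ?_, by simpa [smul_smul] using this⟩
    rw [smul_smul, hz] at this; simp at this; exact hr this

end Aux

section Count
variable {K V V₁ V₂ : Type*} [Field K] [AddCommGroup V] [Module K V]
  [AddCommGroup V₁] [Module K V₁] [AddCommGroup V₂] [Module K V₂]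

noncomputable def projUnitsEquiv (K V : Type*) [Field K] [AddCommGroup V] [Module K V] :
    ℙ K V × Kˣ ≃ {v : V // v ≠ 0} where
  toFun yz := ⟨(yz.2 : K) • yz.1.rep, smul_ne_zero (Units.ne_zero _) yz.1.rep_nonzero⟩
  invFun v := (Projectivization.mk K v.1 v.2,
    ((Projectivization.exists_smul_eq_mk_rep K v.1 v.2).choose)⁻¹)
  left_inv := by
    rintro ⟨y, c⟩
    have hne : (c : K) • y.rep ≠ 0 := smul_ne_zero (Units.ne_zero _) y.rep_nonzero
    have hmk : Projectivization.mk K ((c : K) • y.rep) hne = y := by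
      conv_rhs => rw [← y.mk_rep]
      exact (Projectivization.mk_eq_mk_iff' K _ _ hne y.rep_nonzero).2 ⟨c, rfl⟩
    have hspec := (Projectivization.exists_smul_eq_mk_rep K _ hne).choose_spec
    set a := (Projectivization.exists_smul_eq_mk_rep K _ hne).choose with ha
    refine Prod.ext hmk ?_
    rw [hmk] at hspec
    have this1 : ((a : K) * (c : K)) • y.rep = y.rep := by
      rw [← smul_smul, ← Units.smul_def]
      exact hspec
    have h1 : (a : K) * (c : K) = 1 := by
      nth_rewrite 2 [← one_smul K y.rep] at this1
      exact smul_left_injective K y.rep_nonzero this1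
    have h2 : a * c = 1 := Units.ext (by rw [Units.val_mul, Units.val_one]; exact h1)
    show a⁻¹ = c
    exact inv_eq_of_mul_eq_one_right h2
  right_inv := by
    rintro ⟨v, hv⟩
    have hspec := (Projectivization.exists_smul_eq_mk_rep K v hv).choose_spec
    set a := (Projectivization.exists_smul_eq_mk_rep K v hv).choose with ha
    apply Subtype.ext
    show ((a⁻¹ : Kˣ) : K) • (Projectivization.mk K v hv).rep = v
    rw [← hspec, Units.smul_def, smul_smul]
    simp

noncomputable def segreEquiv (K V₁ V₂ : Type*) [Field K] [AddCommGroup V₁] [Module K V₁]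
    [AddCommGroup V₂] [Module K V₂] :
    (ℙ K V₁ × ℙ K V₂) ≃
      {x : Projectivization K (V₁ ⊗[K] V₂) // ∃ p : V₁, ∃ r : V₂, p ≠ 0 ∧ r ≠ 0 ∧
        x.submodule = Submodule.span K {p ⊗ₜ[K] r}} :=
  Equiv.ofBijective
    (fun yz => ⟨Projectivization.mk K (yz.1.rep ⊗ₜ[K] yz.2.rep)
        (tmul_ne_zero' yz.1.rep_nonzero yz.2.rep_nonzero),
      yz.1.rep, yz.2.rep, yz.1.rep_nonzero, yz.2.rep_nonzero,
      Projectivization.submodule_mk _ _⟩)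
    (by
      constructor
      · rintro ⟨y, z⟩ ⟨y', z'⟩ hyz
        have h1 : Projectivization.mk K (y.rep ⊗ₜ[K] z.rep)
            (tmul_ne_zero' y.rep_nonzero z.rep_nonzero) =
            Projectivization.mk K (y'.rep ⊗ₜ[K] z'.rep)
            (tmul_ne_zero' y'.rep_nonzero z'.rep_nonzero) := congrArg Subtype.val hyz
        rw [Projectivization.mk_eq_mk_iff'] at h1
        obtain ⟨d, hd⟩ := h1
        obtain ⟨⟨a, ha0, ha⟩, ⟨b, hb0, hb⟩⟩ :=
          pure_smul_decomp y.rep_nonzero z.rep_nonzero d hd.symm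
        refine Prod.ext ?_ ?_
        · show y = y'
          conv_lhs => rw [← y.mk_rep]
          conv_rhs => rw [← y'.mk_rep]
          exact (Projectivization.mk_eq_mk_iff' K _ _ y.rep_nonzero y'.rep_nonzero).2
            ⟨a, ha.symm⟩
        · show z = z'
          conv_lhs => rw [← z.mk_rep]
          conv_rhs => rw [← z'.mk_rep]
          exact (Projectivization.mk_eq_mk_iff' K _ _ z.rep_nonzero z'.rep_nonzero).2
            ⟨b, hb.symm⟩
      · rintro ⟨x, p, r, hp, hr, hsub⟩
        refine ⟨(Projectivization.mk K p hp, Projectivization.mk K r hr), ?_⟩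
        apply Subtype.ext
        show Projectivization.mk K _ _ = x
        have hx : x = Projectivization.mk K (p ⊗ₜ[K] r) (tmul_ne_zero' hp hr) := by
          apply Projectivization.submodule_injective
          rw [hsub, Projectivization.submodule_mk]
        rw [hx]
        obtain ⟨a, ha⟩ := Projectivization.exists_smul_eq_mk_rep K p hp
        obtain ⟨b, hb⟩ := Projectivization.exists_smul_eq_mk_rep K r hr
        apply (Projectivization.mk_eq_mk_iff' K _ _ _ _).2
        refine ⟨(a : K) * (b : K), ?_⟩
        rw [← ha, ← hb, Units.smul_def, Units.smul_def, smul_tmul', tmul_smul, smul_tmul', smul_smul, mul_comm])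

lemma proj_card_mul (K : Type*) [Field K] [Fintype K] (d : ℕ) [DecidableEq K] :
    Nat.card (ℙ K (Fin d → K)) * (Fintype.card K - 1) = Fintype.card K ^ d - 1 := by
  have h := Nat.card_congr (projUnitsEquiv K (Fin d → K))
  rw [Nat.card_prod] at h
  have hk : Nat.card Kˣ = Fintype.card K - 1 := by
    rw [Nat.card_eq_fintype_card, Fintype.card_units]
  have hv : Nat.card {v : Fin d → K // v ≠ 0} = Fintype.card K ^ d - 1 := by
    rw [Nat.card_eq_fintype_card]
    have : Fintype.card {v : Fin d → K // v ≠ 0} =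
        Fintype.card (Fin d → K) - Fintype.card {v : Fin d → K // v = 0} := by
      classical
      exact Fintype.card_subtype_compl _
    rw [this, Fintype.card_subtype_eq (0 : Fin d → K)]
    congr 1
    simp [Fintype.card_fun]
  rw [hk, hv] at h
  exact h

end Count



section Prop1
variable {K V V₂ W : Type*} [Field K] [AddCommGroup V] [Module K V]
  [AddCommGroup V₂] [Module K V₂] [AddCommGroup W] [Module K W]

lemma dual_smul_of_ker_le {f g : V →ₗ[K] K} (hf : f ≠ 0)
    (h : ∀ y, f y = 0 → g y = 0) : ∃ c : K, g = c • f := by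
  have : ∃ x, f x ≠ 0 := by
    by_contra hc; push_neg at hc; exact hf (LinearMap.ext fun y => hc y)
  obtain ⟨x₀, hx₀⟩ := this
  set x := (f x₀)⁻¹ • x₀ with hx
  have hfx : f x = 1 := by simp [hx, inv_mul_cancel₀ hx₀]
  refine ⟨g x, LinearMap.ext fun y => ?_⟩
  have hy : f (y - f y • x) = 0 := by simp [hfx]
  have := h _ hy
  simp only [map_sub, map_smul, smul_eq_mul, sub_eq_zero] at this
  simp [this, mul_comm]

lemma map_prop {A B : V₂ →ₗ[K] W} (h : ∀ r, ∃ c : K, B r = c • A r)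
    {r₀ : V₂} (h₀ : A r₀ ≠ 0) : ∃ lam : K, ∀ r, B r = lam • A r := by
  obtain ⟨lam, hlam⟩ := h r₀
  refine ⟨lam, fun r => ?_⟩
  by_cases hdep : ∃ c : K, A r = c • A r₀
  · obtain ⟨c, hc⟩ := hdep
    have hz : A (r - c • r₀) = 0 := by simp [hc]
    obtain ⟨e, he⟩ := h (r - c • r₀)
    rw [hz, smul_zero] at he
    have hBr : B r = c • B r₀ := by
      have := he
      rw [map_sub, map_smul, sub_eq_zero] at this
      exact this
    rw [hBr, hlam, hc, smul_smul, smul_smul, mul_comm]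
  · push_neg at hdep
    obtain ⟨μ, hμ⟩ := h r
    obtain ⟨ν, hν⟩ := h (r + r₀)
    have e1 : ν • A r + ν • A r₀ = μ • A r + lam • A r₀ := by
      have : B (r + r₀) = B r + B r₀ := map_add B r r₀
      rw [hν, hμ, hlam, map_add, smul_add] at this
      exact this
    have key : (ν - μ) • A r = (lam - ν) • A r₀ := by
      rw [sub_smul, sub_smul]
      linear_combination (norm := abel) e1
    by_cases hνμ : ν = μ
    · subst hνμ
      rw [sub_self, zero_smul] at key
      rcases smul_eq_zero.mp key.symm with h1 | h1
      · rw [sub_eq_zero] at h1; rw [hμ, h1]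
      · exact absurd h1 h₀
    · refine absurd ?_ (hdep ((ν - μ)⁻¹ * (lam - ν)))
      rw [← smul_smul, ← key, smul_smul, inv_mul_cancel₀ (sub_ne_zero.mpr hνμ), one_smul]

end Prop1

section TensorProp
variable {K V₁ V₂ : Type*} [Field K] [AddCommGroup V₁] [Module K V₁]
  [AddCommGroup V₂] [Module K V₂]

lemma tensor_dual_prop (φ φ' : (V₁ ⊗[K] V₂) →ₗ[K] K) (hφ : φ ≠ 0)
    (h : ∀ (p : V₁) (r : V₂), φ (p ⊗ₜ[K] r) = 0 → φ' (p ⊗ₜ[K] r) = 0) :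
    ∃ a : K, φ' = a • φ := by
  set A := ((TensorProduct.mk K V₁ V₂).compr₂ φ).flip with hA
  set B := ((TensorProduct.mk K V₁ V₂).compr₂ φ').flip with hB
  have hAr : ∀ (r : V₂) (p : V₁), A r p = φ (p ⊗ₜ[K] r) := fun r p => rfl
  have hBr : ∀ (r : V₂) (p : V₁), B r p = φ' (p ⊗ₜ[K] r) := fun r p => rfl
  have hprop : ∀ r, ∃ c : K, B r = c • A r := by
    intro r
    by_cases hAr0 : A r = 0
    · refine ⟨0, ?_⟩
      rw [zero_smul]
      ext p
      have : A r p = 0 := by rw [hAr0]; rfl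
      rw [hAr] at this
      simpa [hBr] using h p r this
    · exact dual_smul_of_ker_le hAr0 (fun p hp => h p r hp)
  have hex : ∃ r₀, A r₀ ≠ 0 := by
    by_contra hc; push_neg at hc
    apply hφ
    apply TensorProduct.ext'
    intro p r
    have : A r p = 0 := by rw [hc r]; rfl
    rw [hAr] at this
    simpa using this
  obtain ⟨r₀, h₀⟩ := hex
  obtain ⟨lam, hlam⟩ := map_prop hprop h₀
  refine ⟨lam, TensorProduct.ext' fun p r => ?_⟩
  have := LinearMap.congr_fun (hlam r) p
  rw [hBr] at this
  simpa [hAr] using this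

end TensorProp

section Main
variable {K : Type*} [Field K]

lemma segre_point_exists {V₁ V₂ : Type*} [AddCommGroup V₁] [Module K V₁]
    [AddCommGroup V₂] [Module K V₂] {p : V₁} {r : V₂} (hp : p ≠ 0) (hr : r ≠ 0) :
    ∃ x : {x : Projectivization K (V₁ ⊗[K] V₂) // ∃ p : V₁, ∃ r : V₂, p ≠ 0 ∧ r ≠ 0 ∧
        x.submodule = Submodule.span K {p ⊗ₜ[K] r}}, ∃ c : K, c ≠ 0 ∧
        x.1.rep = c • (p ⊗ₜ[K] r) := by
  refine ⟨⟨Projectivization.mk K (p ⊗ₜ[K] r) (tmul_ne_zero' hp hr),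
    p, r, hp, hr, Projectivization.submodule_mk _ _⟩, ?_⟩
  obtain ⟨a, ha⟩ := Projectivization.exists_smul_eq_mk_rep K (p ⊗ₜ[K] r)
    (tmul_ne_zero' hp hr)
  exact ⟨(a : K), Units.ne_zero a, by rw [← ha, Units.smul_def]⟩

end Main
open scoped TensorProduct in
/-- the Segre code `C(S_{m,n})` has length
`(q^{m+1}-1)(q^{n+1}-1)/(q-1)²`, dimension `(m+1)(n+1)`, and is minimal. -/
theorem stmt_16 (K : Type*) [Field K] [Fintype K] (m n : ℕ) :
    Nat.card {x : Projectivization K ((Fin (m + 1) → K) ⊗[K] (Fin (n + 1) → K)) //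
          ∃ p : Fin (m + 1) → K, ∃ r : Fin (n + 1) → K, p ≠ 0 ∧ r ≠ 0 ∧
            x.submodule = Submodule.span K {p ⊗ₜ[K] r}}
          * (Fintype.card K - 1) ^ 2
        = (Fintype.card K ^ (m + 1) - 1) * (Fintype.card K ^ (n + 1) - 1) ∧
      Module.finrank K
          (evCode K (fun x : {x : Projectivization K
              ((Fin (m + 1) → K) ⊗[K] (Fin (n + 1) → K)) //
              ∃ p : Fin (m + 1) → K, ∃ r : Fin (n + 1) → K, p ≠ 0 ∧ r ≠ 0 ∧
                x.submodule = Submodule.span K {p ⊗ₜ[K] r}} => x.1.rep))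
        = (m + 1) * (n + 1) ∧
      IsMinimalCode (evCode K (fun x : {x : Projectivization K
          ((Fin (m + 1) → K) ⊗[K] (Fin (n + 1) → K)) //
          ∃ p : Fin (m + 1) → K, ∃ r : Fin (n + 1) → K, p ≠ 0 ∧ r ≠ 0 ∧
            x.submodule = Submodule.span K {p ⊗ₜ[K] r}} => x.1.rep)) := by
  classical
  set E : Module.Dual K ((Fin (m + 1) → K) ⊗[K] (Fin (n + 1) → K)) →ₗ[K]
      ({x : Projectivization K ((Fin (m + 1) → K) ⊗[K] (Fin (n + 1) → K)) //
        ∃ p : Fin (m + 1) → K, ∃ r : Fin (n + 1) → K, p ≠ 0 ∧ r ≠ 0 ∧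
        x.submodule = Submodule.span K {p ⊗ₜ[K] r}} → K) :=
    LinearMap.pi (fun x => LinearMap.applyₗ (x.1.rep)) with hE
  have hEapp : ∀ φ x, E φ x = φ x.1.rep := fun φ x => rfl
  have hcode : evCode K (fun x : {x : Projectivization K
      ((Fin (m + 1) → K) ⊗[K] (Fin (n + 1) → K)) //
      ∃ p : Fin (m + 1) → K, ∃ r : Fin (n + 1) → K, p ≠ 0 ∧ r ≠ 0 ∧
        x.submodule = Submodule.span K {p ⊗ₜ[K] r}} => x.1.rep) = LinearMap.range E := rfl
  have hEinj : Function.Injective E := by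
    intro φ ψ hfψ
    suffices h : ∀ φ₀ : Module.Dual K ((Fin (m + 1) → K) ⊗[K] (Fin (n + 1) → K)),
        E φ₀ = 0 → φ₀ = 0 by
      have := h (φ - ψ) (by rw [map_sub, hfψ, sub_self])
      rwa [sub_eq_zero] at this
    intro φ₀ h0
    apply TensorProduct.ext'
    intro p r
    rw [LinearMap.zero_apply]
    rcases eq_or_ne p 0 with hp | hp
    · rw [hp, TensorProduct.zero_tmul, LinearMap.map_zero]
    rcases eq_or_ne r 0 with hr | hr
    · rw [hr, TensorProduct.tmul_zero, LinearMap.map_zero]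
    obtain ⟨x, c, hc, hrep⟩ := segre_point_exists (K := K) hp hr
    have hx : φ₀ x.1.rep = 0 := by rw [← hEapp, h0]; rfl
    rw [hrep, LinearMap.map_smul, smul_eq_mul] at hx
    exact (mul_eq_zero.mp hx).resolve_left hc
  refine ⟨?_, ?_, ?_⟩
  · -- counting
    have e := Nat.card_congr (segreEquiv K (Fin (m + 1) → K) (Fin (n + 1) → K))
    rw [Nat.card_prod] at e
    rw [← e]
    have h1 := @proj_card_mul K _ _ (m + 1) (Classical.decEq K)
    have h2 := @proj_card_mul K _ _ (n + 1) (Classical.decEq K)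
    rw [← h1, ← h2, pow_two]
    ring
  · -- dimension
    rw [hcode, LinearMap.finrank_range_of_inj hEinj, Subspace.dual_finrank_eq,
      Module.finrank_tensorProduct, Module.finrank_fin_fun, Module.finrank_fin_fun]
  · -- minimality
    intro c hc hc0 c' hc' hsupp
    rw [hcode] at hc hc'
    obtain ⟨φ, hφ⟩ := hc
    obtain ⟨φ', hφ'⟩ := hc'
    have hφne : φ ≠ 0 := by
      intro h
      rw [h, map_zero] at hφ
      exact hc0 hφ.symm
    have hyp : ∀ (p : Fin (m + 1) → K) (r : Fin (n + 1) → K),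
        φ (p ⊗ₜ[K] r) = 0 → φ' (p ⊗ₜ[K] r) = 0 := by
      intro p r hpr
      rcases eq_or_ne p 0 with hp | hp
      · rw [hp, TensorProduct.zero_tmul, LinearMap.map_zero]
      rcases eq_or_ne r 0 with hr | hr
      · rw [hr, TensorProduct.tmul_zero, LinearMap.map_zero]
      obtain ⟨x, c₀, hc₀, hrep⟩ := segre_point_exists (K := K) hp hr
      have hcx : c x = 0 := by
        rw [← hφ, hEapp, hrep, LinearMap.map_smul, smul_eq_mul, hpr, mul_zero]
      have hx' : x ∉ Function.support c := by simp [Function.mem_support, hcx]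
      have hcx' : c' x = 0 := by
        by_contra hne
        exact hx' (hsupp (Function.mem_support.mpr hne))
      rw [← hφ', hEapp, hrep, LinearMap.map_smul, smul_eq_mul] at hcx'
      exact (mul_eq_zero.mp hcx').resolve_left hc₀
    obtain ⟨a, ha⟩ := tensor_dual_prop φ φ' hφne hyp
    refine ⟨a, ?_⟩
    rw [← hφ', ha, map_smul, hφ]
end

section
/- Let Γ be the point-hyperplane geometry of PG(n, q) and ε₁ the Segre embedding sending the flag ([x],[ξ]) (with ξ(x)=0) to [x⊗ξ] in PG(W), where W = {M ∈ M_{n+1}(F_q) : Tr(M)=0}. Then the image Λ₁ = ε₁(P) spans PG(W), so the associated projective code C(Λ₁) has length (q^{n+1}−1)(q^n−1)/(q−1)² and dimension n²+2n. -/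
section Aux18
open Matrix

variable {K : Type*} [Field K] {n : ℕ}

private def Sset (K : Type*) [Field K] (n : ℕ) : Set (Matrix (Fin (n + 1)) (Fin (n + 1)) K) :=
  {M | ∃ x ξ : Fin (n + 1) → K, x ≠ 0 ∧ ξ ≠ 0 ∧ ξ ⬝ᵥ x = 0 ∧ M = vecMulVec x ξ}

private lemma single_ne_zero' (i : Fin (n + 1)) : (Pi.single i (1 : K) : Fin (n + 1) → K) ≠ 0 := by
  intro hc
  have := congrFun hc i
  simp [Pi.single_apply] at this

private lemma vmv_expand (u v w z : Fin (n + 1) → K) :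
    vecMulVec (u + v) (w - z) =
      vecMulVec u w - vecMulVec u z + (vecMulVec v w - vecMulVec v z) := by
  ext a b
  simp only [vecMulVec_apply, Pi.add_apply, Pi.sub_apply, Matrix.add_apply, Matrix.sub_apply]
  ring

private lemma vecMulVec_single (i j : Fin (n + 1)) :
    vecMulVec (Pi.single i (1 : K)) (Pi.single j 1) = Matrix.single i j 1 := by
  ext a b
  simp [vecMulVec_apply, Matrix.single, Pi.single_apply]
  split_ifs <;> simp_all

private lemma mem1 (i j : Fin (n + 1)) (h : i ≠ j) :
    Matrix.single i j (1 : K) ∈ Submodule.span K (Sset K n) := by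
  apply Submodule.subset_span
  refine ⟨Pi.single i 1, Pi.single j 1, single_ne_zero' i, single_ne_zero' j, ?_,
    (vecMulVec_single i j).symm⟩
  rw [single_dotProduct, Pi.single_apply]
  simp [h.symm]

private lemma mem2 (i : Fin (n + 1)) :
    Matrix.single i i (1 : K) - Matrix.single 0 0 1 ∈ Submodule.span K (Sset K n) := by
  by_cases h : i = 0
  · subst h; simp
  · have hF : vecMulVec (Pi.single (0 : Fin (n+1)) (1:K) + Pi.single i 1)
        (Pi.single (0 : Fin (n+1)) (1:K) - Pi.single i 1) ∈ Sset K n := by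
      refine ⟨_, _, ?_, ?_, ?_, rfl⟩
      · intro hc
        have := congrFun hc 0
        simp [Pi.single_apply, h] at this
      · intro hc
        have := congrFun hc 0
        simp [Pi.single_apply, h] at this
      · simp [sub_dotProduct, single_dotProduct, Pi.add_apply, Pi.single_apply, h, Ne.symm h]
    have hFeq : vecMulVec (Pi.single (0 : Fin (n+1)) (1:K) + Pi.single i 1)
        (Pi.single (0 : Fin (n+1)) (1:K) - Pi.single i 1) =
        Matrix.single (0 : Fin (n+1)) (0 : Fin (n+1)) (1:K) - Matrix.single (0 : Fin (n+1)) i 1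
          + (Matrix.single i (0 : Fin (n+1)) 1 - Matrix.single i i 1) := by
      rw [vmv_expand, vecMulVec_single, vecMulVec_single, vecMulVec_single, vecMulVec_single]
    have key : Matrix.single i i (1 : K) - Matrix.single 0 0 1 =
        (Matrix.single i 0 1 - Matrix.single 0 i 1) -
          vecMulVec (Pi.single (0 : Fin (n+1)) (1:K) + Pi.single i 1)
            (Pi.single (0 : Fin (n+1)) (1:K) - Pi.single i 1) := by
      rw [hFeq]; abel
    rw [key]
    exact Submodule.sub_mem _ (Submodule.sub_mem _ (mem1 i 0 h) (mem1 0 i (Ne.symm h)))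
      (Submodule.subset_span hF)

private lemma span_S (K : Type*) [Field K] (n : ℕ) :
    Submodule.span K (Sset K n) = LinearMap.ker (traceLinearMap (Fin (n + 1)) K K) := by
  apply le_antisymm
  · rw [Submodule.span_le]
    rintro M ⟨x, ξ, hx, hξ, hd, rfl⟩
    simp only [SetLike.mem_coe, LinearMap.mem_ker, traceLinearMap_apply]
    have : trace (vecMulVec x ξ) = ξ ⬝ᵥ x := by
      simp [trace, diag, vecMulVec_apply, dotProduct, mul_comm]
    rw [this, hd]
  · intro M hM
    have htr : ∑ i, M i i = 0 := by
      simpa [trace, diag] using (LinearMap.mem_ker.1 hM)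
    have h1 : ∑ i, ∑ j, M i j • Matrix.single i j (1 : K) = M := by
      conv_rhs => rw [matrix_eq_sum_single M]
      refine Finset.sum_congr rfl fun i _ => Finset.sum_congr rfl fun j _ => ?_
      rw [smul_single, smul_eq_mul, mul_one]
    have h2 : ∑ i, ∑ j, M i j •
        (if i = j then Matrix.single (0 : Fin (n+1)) (0 : Fin (n+1)) (1 : K) else 0) = 0 := by
      simp only [smul_ite, smul_zero, Finset.sum_ite_eq, Finset.mem_univ, if_true]
      rw [← Finset.sum_smul, htr, zero_smul]
    have hrep : M = ∑ i, ∑ j, M i j • (Matrix.single i j (1 : K) -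
        if i = j then Matrix.single 0 0 1 else 0) := by
      simp only [smul_sub, Finset.sum_sub_distrib]
      rw [h1, h2, sub_zero]
    rw [hrep]
    refine Submodule.sum_mem _ fun i _ => Submodule.sum_mem _ fun j _ =>
      Submodule.smul_mem _ _ ?_
    by_cases h : i = j
    · subst h; simpa using mem2 i
    · simpa [h] using mem1 i j h



private lemma finrank_ker_trace (K : Type*) [Field K] (n : ℕ) :
    Module.finrank K (LinearMap.ker (traceLinearMap (Fin (n + 1)) K K)) = n ^ 2 + 2 * n := by
  have hs : LinearMap.range (traceLinearMap (Fin (n + 1)) K K) = ⊤ := by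
    rw [LinearMap.range_eq_top]
    intro c
    refine ⟨Matrix.single 0 0 c, ?_⟩
    simp [traceLinearMap_apply, trace, diag, Matrix.single, Finset.sum_ite_eq]
  have h := LinearMap.finrank_range_add_finrank_ker (traceLinearMap (Fin (n + 1)) K K)
  rw [hs, finrank_top] at h
  rw [Module.finrank_matrix] at h
  simp only [Module.finrank_self, mul_one, Fintype.card_fin] at h
  have : (n + 1) * (n + 1) = n ^ 2 + 2 * n + 1 := by ring
  omega

section Aux18b
open Projectivization
variable {K : Type*} [Field K] {n : ℕ}

private lemma cond_iff (p q : Projectivization K (Fin (n + 1) → K)) :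
    (∀ x ∈ p.submodule, ∀ ξ ∈ q.submodule, ξ ⬝ᵥ x = 0) ↔ q.rep ⬝ᵥ p.rep = 0 := by
  constructor
  · intro h
    exact h _ (by rw [Projectivization.submodule_eq]; exact Submodule.mem_span_singleton_self _) _
      (by rw [Projectivization.submodule_eq]; exact Submodule.mem_span_singleton_self _)
  · intro h x hx ξ hξ
    rw [Projectivization.submodule_eq] at hx hξ
    obtain ⟨a, rfl⟩ := Submodule.mem_span_singleton.1 hx
    obtain ⟨b, rfl⟩ := Submodule.mem_span_singleton.1 hξ
    rw [smul_dotProduct, dotProduct_smul, h]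
    simp

private lemma fiber_card [Fintype K] (x : Fin (n + 1) → K) (hx : x ≠ 0) :
    Nat.card {ξ : Fin (n + 1) → K // ξ ≠ 0 ∧ ξ ⬝ᵥ x = 0} = Fintype.card K ^ n - 1 := by
  classical
  let φ : (Fin (n + 1) → K) →ₗ[K] K :=
    { toFun := fun ξ => ξ ⬝ᵥ x
      map_add' := fun u v => add_dotProduct u v x
      map_smul' := fun c v => smul_dotProduct c v x }
  have hsurj : LinearMap.range φ = ⊤ := by
    rw [LinearMap.range_eq_top]
    intro c
    obtain ⟨i, hi⟩ := Function.ne_iff.1 hx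
    refine ⟨Pi.single i (c * (x i)⁻¹), ?_⟩
    show Pi.single i (c * (x i)⁻¹) ⬝ᵥ x = c
    rw [single_dotProduct, mul_assoc, inv_mul_cancel₀ (by simpa using hi), mul_one]
  have hker : Module.finrank K (LinearMap.ker φ) = n := by
    have h := LinearMap.finrank_range_add_finrank_ker φ
    rw [hsurj, finrank_top, Module.finrank_self, Module.finrank_fintype_fun_eq_card,
      Fintype.card_fin] at h
    omega
  have e : {ξ : Fin (n + 1) → K // ξ ≠ 0 ∧ ξ ⬝ᵥ x = 0} ≃ {y : LinearMap.ker φ // y ≠ 0} :=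
    { toFun := fun v => ⟨⟨v.1, v.2.2⟩, fun h => v.2.1 (congrArg Subtype.val h)⟩
      invFun := fun y => ⟨y.1.1, fun h => y.2 (Subtype.ext h), y.1.2⟩
      left_inv := fun v => rfl
      right_inv := fun y => rfl }
  rw [Nat.card_congr e, Nat.card_eq_fintype_card, Fintype.card_subtype_compl,
    Fintype.card_subtype_eq (0 : LinearMap.ker φ),
    Module.card_eq_pow_finrank (K := K) (V := LinearMap.ker φ), hker]

private lemma count_lemma (K : Type*) [Field K] [Fintype K] (n : ℕ) :
    Nat.card {pq : Projectivization K (Fin (n + 1) → K) ×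
          Projectivization K (Fin (n + 1) → K) //
          ∀ x ∈ pq.1.submodule, ∀ ξ ∈ pq.2.submodule, ξ ⬝ᵥ x = 0}
        * (Fintype.card K - 1) ^ 2
      = (Fintype.card K ^ (n + 1) - 1) * (Fintype.card K ^ n - 1) := by
  classical
  set V := Fin (n + 1) → K with hV
  set P := Projectivization K V with hP
  set Flag := {pq : P × P // ∀ x ∈ pq.1.submodule, ∀ ξ ∈ pq.2.submodule, ξ ⬝ᵥ x = 0}
    with hFlag
  set Pairs := {v : V × V // v.1 ≠ 0 ∧ v.2 ≠ 0 ∧ v.2 ⬝ᵥ v.1 = 0} with hPairs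
  have hne : ∀ (a : Kˣ) (p : P), a • p.rep ≠ 0 := fun a p => by
    rw [Units.smul_def]; exact smul_ne_zero (Units.ne_zero _) (rep_nonzero _)
  -- the bijection Flag × Kˣ × Kˣ ≃ Pairs
  let f : Flag × (Kˣ × Kˣ) → Pairs := fun z =>
    ⟨(z.2.1 • z.1.1.1.rep, z.2.2 • z.1.1.2.rep),
      hne _ _, hne _ _,
      by
        rw [Units.smul_def, Units.smul_def, smul_dotProduct, dotProduct_smul,
          (cond_iff _ _).1 z.1.2]
        simp⟩
  have hmk : ∀ (a : Kˣ) (p : P) (h : a • p.rep ≠ 0),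
      Projectivization.mk K (a • p.rep) h = p := by
    intro a p h
    conv_rhs => rw [← p.mk_rep]
    rw [mk_eq_mk_iff]
    exact ⟨a, rfl⟩
  have hcancel : ∀ (a a' : Kˣ) (v : V), v ≠ 0 → a • v = a' • v → a = a' := by
    intro a a' v hv h
    rw [Units.smul_def, Units.smul_def] at h
    have : ((a : K) - a') • v = 0 := by rw [sub_smul, h, sub_self]
    rcases smul_eq_zero.1 this with h' | h'
    · exact Units.ext (sub_eq_zero.1 h')
    · exact absurd h' hv
  have hbij : Function.Bijective f := by
    constructor
    · rintro ⟨⟨⟨p, q⟩, h⟩, a, b⟩ ⟨⟨⟨p', q'⟩, h'⟩, a', b'⟩ heq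
      have h1 : a • p.rep = a' • p'.rep := congrArg (fun v => v.1.1) heq
      have h2 : b • q.rep = b' • q'.rep := congrArg (fun v => v.1.2) heq
      have hp : p = p' := by
        rw [← hmk a p (hne a p), ← hmk a' p' (hne a' p'), mk_eq_mk_iff]
        exact ⟨1, by rw [one_smul, h1]⟩
      subst hp
      have hq : q = q' := by
        rw [← hmk b q (hne b q), ← hmk b' q' (hne b' q'), mk_eq_mk_iff]
        exact ⟨1, by rw [one_smul, h2]⟩
      subst hq
      have ha : a = a' := hcancel a a' p.rep p.rep_nonzero h1
      have hb : b = b' := hcancel b b' q.rep q.rep_nonzero h2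
      subst ha; subst hb
      rfl
    · rintro ⟨⟨x, ξ⟩, hx, hξ, hd⟩
      obtain ⟨a, ha⟩ := exists_smul_eq_mk_rep K x hx
      obtain ⟨b, hb⟩ := exists_smul_eq_mk_rep K ξ hξ
      have hcond : ∀ x' ∈ (Projectivization.mk K x hx).submodule,
          ∀ ξ' ∈ (Projectivization.mk K ξ hξ).submodule, ξ' ⬝ᵥ x' = 0 := by
        rw [cond_iff, ← ha, ← hb, Units.smul_def, Units.smul_def, smul_dotProduct,
          dotProduct_smul, hd]
        simp
      refine ⟨⟨⟨(Projectivization.mk K x hx, Projectivization.mk K ξ hξ), hcond⟩,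
        a⁻¹, b⁻¹⟩, ?_⟩
      apply Subtype.ext
      show (a⁻¹ • (Projectivization.mk K x hx).rep, b⁻¹ • (Projectivization.mk K ξ hξ).rep)
        = (x, ξ)
      rw [← ha, ← hb, inv_smul_smul, inv_smul_smul]
  have hcard1 : Nat.card Flag * (Fintype.card K - 1) ^ 2 = Nat.card Pairs := by
    rw [← Nat.card_eq_of_bijective f hbij, Nat.card_prod, Nat.card_prod, Nat.card_units,
      Nat.card_eq_fintype_card (α := K)]
    ring
  rw [hcard1]
  -- now count Pairs
  have e : Pairs ≃ Σ x : {x : V // x ≠ 0}, {ξ : V // ξ ≠ 0 ∧ ξ ⬝ᵥ (x : V) = 0} :=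
    { toFun := fun v => ⟨⟨v.1.1, v.2.1⟩, ⟨v.1.2, v.2.2.1, v.2.2.2⟩⟩
      invFun := fun s => ⟨(s.1.1, s.2.1), s.1.2, s.2.2.1, s.2.2.2⟩
      left_inv := fun v => rfl
      right_inv := fun s => rfl }
  rw [Nat.card_congr e, Nat.card_eq_fintype_card, Fintype.card_sigma]
  have hfib : ∀ x : {x : V // x ≠ 0},
      Fintype.card {ξ : V // ξ ≠ 0 ∧ ξ ⬝ᵥ (x : V) = 0} = Fintype.card K ^ n - 1 := by
    intro x
    rw [← Nat.card_eq_fintype_card]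
    exact fiber_card x.1 x.2
  rw [Finset.sum_congr rfl fun x _ => hfib x, Finset.sum_const, Finset.card_univ,
    Fintype.card_subtype_compl, Fintype.card_subtype_eq (0 : V), smul_eq_mul]
  congr 1
  rw [Fintype.card_fun, Fintype.card_fin]

end Aux18b
end Aux18

open Matrix in
/-- the image of the Segre embedding of the point-hyperplane
geometry of `PG(n,q)` (the rank-one trace-zero matrices) spans the trace-zero
hyperplane `W`, so the code `C(Λ₁)` has length `(q^{n+1}-1)(q^n-1)/(q-1)²` and
dimension `n²+2n`. -/
theorem stmt_18 (K : Type*) [Field K] [Fintype K] (n : ℕ) :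
    Submodule.span K {M : Matrix (Fin (n + 1)) (Fin (n + 1)) K |
          ∃ x ξ : Fin (n + 1) → K, x ≠ 0 ∧ ξ ≠ 0 ∧ ξ ⬝ᵥ x = 0 ∧
            M = vecMulVec x ξ}
        = LinearMap.ker (traceLinearMap (Fin (n + 1)) K K) ∧
      Module.finrank K (Submodule.span K
          {M : Matrix (Fin (n + 1)) (Fin (n + 1)) K |
            ∃ x ξ : Fin (n + 1) → K, x ≠ 0 ∧ ξ ≠ 0 ∧ ξ ⬝ᵥ x = 0 ∧
              M = vecMulVec x ξ}) = n ^ 2 + 2 * n ∧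
      Nat.card {pq : Projectivization K (Fin (n + 1) → K) ×
            Projectivization K (Fin (n + 1) → K) //
            ∀ x ∈ pq.1.submodule, ∀ ξ ∈ pq.2.submodule, ξ ⬝ᵥ x = 0}
          * (Fintype.card K - 1) ^ 2
        = (Fintype.card K ^ (n + 1) - 1) * (Fintype.card K ^ n - 1) := by
  refine ⟨span_S K n, ?_, count_lemma K n⟩
  show Module.finrank K (Submodule.span K (Sset K n)) = n ^ 2 + 2 * n
  rw [span_S]
  exact finrank_ker_trace K n
end
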